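/- arXiv:2207.09922 — 3 statements merged into one kernel-verified Lean document; each statement's English description precedes it below -/
import Mathlib

section
/- For odd d and any (r,s), (r',s') in ℤ_d × ℤ_d, the sum over (k,l) ∈ ℤ_d × ℤ_d of (W_{(k,l)} W_{(r,s)} W_{(k,l)}^{-1}) ⊗ (W_{(k,l)} W_{(r',s')} W_{(k,l)}^{-1}) equals d²·(W_{(r,s)} ⊗ W_{(−r,−s)}) if (r',s') = (−r,−s) mod d, and equals the zero matrix otherwise. -/
open Matrix Complex BigOperators
open scoped Kronecker

noncomputable def tauC (d : ℕ) : ℂ := - Complex.exp (Real.pi * Complex.I / d)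

/-- `U = diag(e^{2πik/d})`. -/
noncomputable def Umat (d : ℕ) [NeZero d] : Matrix (ZMod d) (ZMod d) ℂ :=
  Matrix.diagonal fun k => Complex.exp (2 * Real.pi * Complex.I * k.val / d)

/-- `V` the cyclic shift: `V e_r = e_{r+1}`. -/
def Vmat (d : ℕ) [NeZero d] : Matrix (ZMod d) (ZMod d) ℂ :=
  fun i j => if i = j + 1 then 1 else 0

/-- Weyl–Heisenberg matrices `W_{(r,s)} = τ^{rs} V^r U^s`. -/
noncomputable def WH (d : ℕ) [NeZero d] (r s : ZMod d) : Matrix (ZMod d) (ZMod d) ℂ :=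
  (tauC d) ^ (r.val * s.val) • ((Vmat d) ^ r.val * (Umat d) ^ s.val)

/-- The SWAP operator on `ℂ^d ⊗ ℂ^d`. -/
def SWAPmat (d : ℕ) [NeZero d] : Matrix (ZMod d × ZMod d) (ZMod d × ZMod d) ℂ :=
  fun p q => if p.1 = q.2 ∧ p.2 = q.1 then 1 else 0


noncomputable def zetaC (d : ℕ) : ℂ := Complex.exp (2 * Real.pi * Complex.I / d)

noncomputable def chi (d : ℕ) [NeZero d] (a : ZMod d) : ℂ := zetaC d ^ a.val

lemma zetaC_prim (d : ℕ) [NeZero d] : IsPrimitiveRoot (zetaC d) d :=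
  Complex.isPrimitiveRoot_exp d (NeZero.ne d)

lemma zetaC_pow_d (d : ℕ) [NeZero d] : zetaC d ^ d = 1 := (zetaC_prim d).pow_eq_one

lemma chi_natCast (d : ℕ) [NeZero d] (n : ℕ) : zetaC d ^ n = chi d (n : ZMod d) := by
  conv_lhs => rw [← Nat.div_add_mod n d]
  rw [pow_add, pow_mul, zetaC_pow_d, one_pow, one_mul, chi, ZMod.val_natCast]

lemma chi_add (d : ℕ) [NeZero d] (a b : ZMod d) : chi d (a + b) = chi d a * chi d b := by
  rw [chi, chi, chi, ← pow_add, chi_natCast, chi_natCast]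
  congr 1
  push_cast
  simp [ZMod.natCast_val, ZMod.cast_id]

lemma chi_zero (d : ℕ) [NeZero d] : chi d 0 = 1 := by simp [chi]

lemma chi_sum (d : ℕ) [NeZero d] (c : ZMod d) :
    ∑ k : ZMod d, chi d (k * c) = if c = 0 then (d : ℂ) else 0 := by
  split_ifs with h
  · subst h
    simp [chi_zero, ZMod.card]
  · have hprim := zetaC_prim d
    set x := zetaC d ^ c.val with hx
    have hx1 : x ≠ 1 := by
      intro hx1
      have hdvd : d ∣ c.val := (hprim.pow_eq_one_iff_dvd c.val).mp hx1
      have : c.val = 0 := Nat.eq_zero_of_dvd_of_lt hdvd (ZMod.val_lt c)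
      exact h (by rwa [ZMod.val_eq_zero] at this)
    have key : ∀ k : ZMod d, chi d (k * c) = x ^ k.val := by
      intro k
      rw [hx, ← pow_mul, mul_comm c.val, chi_natCast]
      congr 1
      push_cast
      simp [ZMod.natCast_val, ZMod.cast_id]
    simp only [key]
    have hbij : ∑ k : ZMod d, x ^ k.val = ∑ n ∈ Finset.range d, x ^ n := by
      refine Finset.sum_nbij' (fun k => k.val) (fun n => (n : ZMod d)) ?_ ?_ ?_ ?_ ?_ <;>
        simp [ZMod.val_lt, ZMod.val_natCast, Nat.mod_eq_of_lt, ZMod.natCast_val, ZMod.cast_id] <;> (intros; exact Nat.mod_eq_of_lt ‹_›)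
    rw [hbij, geom_sum_eq hx1]
    have : x ^ d = 1 := by
      rw [hx, ← pow_mul, mul_comm, pow_mul, zetaC_pow_d, one_pow]
    rw [this]; simp





lemma tauC_eq_zetaC (d : ℕ) [NeZero d] (hd : Odd d) : tauC d = zetaC d ^ ((d + 1) / 2) := by
  have hd0 : (d : ℂ) ≠ 0 := Nat.cast_ne_zero.mpr (NeZero.ne d)
  have h2 : tauC d ^ 2 = zetaC d := by
    rw [tauC, neg_pow, ← Complex.exp_nat_mul, zetaC]
    norm_num
    ring_nf
  have hpd : tauC d ^ d = 1 := by
    rw [tauC, neg_pow, hd.neg_one_pow, ← Complex.exp_nat_mul]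
    rw [show (d : ℂ) * (Real.pi * Complex.I / d) = Real.pi * Complex.I by field_simp]
    rw [Complex.exp_pi_mul_I]; ring
  obtain ⟨m, hm⟩ := hd
  have hdiv : (d + 1) / 2 = m + 1 := by omega
  calc tauC d = tauC d ^ d * tauC d := by rw [hpd, one_mul]
    _ = tauC d ^ (d + 1) := by rw [pow_succ]
    _ = (tauC d ^ 2) ^ ((d + 1) / 2) := by rw [← pow_mul]; congr 1; omega
    _ = zetaC d ^ ((d + 1) / 2) := by rw [h2]

/-- half parameter -/
noncomputable def hh (d : ℕ) [NeZero d] : ZMod d := (((d + 1) / 2 : ℕ) : ZMod d)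

lemma hh_add_hh (d : ℕ) [NeZero d] (hd : Odd d) : hh d + hh d = 1 := by
  obtain ⟨m, hm⟩ := hd
  have : ((d + 1) / 2 : ℕ) + ((d + 1) / 2 : ℕ) = d + 1 := by omega
  rw [hh, ← Nat.cast_add, this]
  push_cast [ZMod.natCast_self]
  ring

lemma tauC_pow (d : ℕ) [NeZero d] (hd : Odd d) (n : ℕ) :
    tauC d ^ n = chi d (hh d * (n : ZMod d)) := by
  rw [tauC_eq_zetaC d hd, ← pow_mul, chi_natCast]
  congr 1
  push_cast [hh]
  ring

lemma Vpow_apply (d : ℕ) [NeZero d] (n : ℕ) (i j : ZMod d) :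
    (Vmat d ^ n) i j = if i = j + (n : ZMod d) then 1 else 0 := by
  induction n generalizing i j with
  | zero => simp [Matrix.one_apply]
  | succ n ih =>
    rw [pow_succ, Matrix.mul_apply]
    simp only [ih, Vmat, ite_mul, mul_ite, one_mul, mul_one, mul_zero, zero_mul]
    rw [Finset.sum_ite_eq' Finset.univ (j + 1)]
    push_cast
    simp [add_assoc, add_comm (1 : ZMod d)]

lemma WH_apply (d : ℕ) [NeZero d] (hd : Odd d) (r s i j : ZMod d) :
    WH d r s i j = if i = j + r then chi d (hh d * (r * s) + j * s) else 0 := by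
  rw [WH, Matrix.smul_apply, Umat, Matrix.diagonal_pow, Matrix.mul_diagonal]
  rw [Vpow_apply, tauC_pow d hd]
  have h1 : ((r.val : ZMod d)) = r := by simp [ZMod.natCast_val, ZMod.cast_id]
  have h2 : Complex.exp (2 * Real.pi * Complex.I * j.val / d) ^ s.val = chi d (j * s) := by
    have : Complex.exp (2 * Real.pi * Complex.I * j.val / d) = zetaC d ^ (j.val : ℕ) := by
      rw [zetaC, ← Complex.exp_nat_mul]; ring_nf
    rw [this, ← pow_mul, chi_natCast]
    congr 1
    push_cast
    simp [ZMod.natCast_val, ZMod.cast_id]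
  have h3 : ((r.val * s.val : ℕ) : ZMod d) = r * s := by
    push_cast
    simp [ZMod.natCast_val, ZMod.cast_id]
  simp only [Pi.pow_apply]
  rw [h1, h2, h3]
  split_ifs with h
  · rw [smul_eq_mul, one_mul, ← chi_add]
  · simp

lemma WH_mul (d : ℕ) [NeZero d] (hd : Odd d) (k l r s : ZMod d) :
    WH d k l * WH d r s = chi d (hh d * (r * l - k * s)) • WH d (k + r) (l + s) := by
  have h2 := hh_add_hh d hd
  ext i j
  rw [Matrix.mul_apply, Matrix.smul_apply]
  simp only [WH_apply d hd, ite_mul, mul_ite, zero_mul, mul_zero]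
  rw [Finset.sum_ite_eq' Finset.univ (j + r)]
  simp only [Finset.mem_univ, if_true, smul_eq_mul, mul_ite, mul_zero]
  have hcond : (i = j + r + k) ↔ (i = j + (k + r)) := by constructor <;> (intro h; rw [h]; ring)
  split_ifs with ha hb hb
  · rw [← chi_add, ← chi_add]
    congr 1
    linear_combination (-(r * l)) * h2
  · exact absurd (hcond.mp ha) hb
  · exact absurd (hcond.mpr hb) ha
  · rfl

lemma WH_zero (d : ℕ) [NeZero d] : WH d 0 0 = 1 := by
  simp [WH, ZMod.val_zero]

lemma WH_mul_neg (d : ℕ) [NeZero d] (hd : Odd d) (k l : ZMod d) :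
    WH d k l * WH d (-k) (-l) = 1 := by
  rw [WH_mul d hd]
  have : (-k) * l - k * (-l) = 0 := by ring
  rw [this]
  simp [chi_zero, WH_zero]

lemma WH_inv (d : ℕ) [NeZero d] (hd : Odd d) (k l : ZMod d) :
    (WH d k l)⁻¹ = WH d (-k) (-l) :=
  Matrix.inv_eq_right_inv (WH_mul_neg d hd k l)

lemma WH_conj (d : ℕ) [NeZero d] (hd : Odd d) (k l r s : ZMod d) :
    WH d k l * WH d r s * (WH d k l)⁻¹ = chi d (r * l - k * s) • WH d r s := by
  have h2 := hh_add_hh d hd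
  rw [WH_inv d hd, WH_mul d hd k l r s, Matrix.smul_mul, WH_mul d hd (k + r) (l + s) (-k) (-l),
    smul_smul, ← chi_add]
  have e1 : k + r + -k = r := by ring
  have e2 : l + s + -l = s := by ring
  rw [e1, e2]
  congr 2
  linear_combination (r * l - k * s) * h2

theorem WH_twirl (d : ℕ) [NeZero d] (hd : Odd d) (r s r' s' : ZMod d) :
    ∑ k : ZMod d, ∑ l : ZMod d,
        (WH d k l * WH d r s * (WH d k l)⁻¹) ⊗ₖ (WH d k l * WH d r' s' * (WH d k l)⁻¹) =
      if r' = -r ∧ s' = -s then ((d : ℂ) ^ 2) • (WH d r s ⊗ₖ WH d (-r) (-s)) else 0 := by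
  have key : ∀ k l : ZMod d,
      (WH d k l * WH d r s * (WH d k l)⁻¹) ⊗ₖ (WH d k l * WH d r' s' * (WH d k l)⁻¹)
        = (chi d (k * (-(s + s'))) * chi d (l * (r + r'))) • (WH d r s ⊗ₖ WH d r' s') := by
    intro k l
    rw [WH_conj d hd, WH_conj d hd, Matrix.smul_kronecker, Matrix.kronecker_smul, smul_smul,
      ← chi_add, ← chi_add]
    congr 2
    ring
  simp only [key, ← Finset.sum_smul, ← Finset.sum_mul_sum, chi_sum]
  by_cases hc : r' = -r ∧ s' = -s
  · obtain ⟨h1, h2⟩ := hc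
    subst h1; subst h2
    simp [pow_two]
  · rw [if_neg hc]
    by_cases h1 : s' = -s
    · have h2 : r' ≠ -r := fun h => hc ⟨h, h1⟩
      have h3 : r + r' ≠ 0 := by
        intro h0
        exact h2 (neg_eq_of_add_eq_zero_right h0).symm
      rw [if_neg h3, mul_zero, zero_smul]
    · have h3 : -(s + s') ≠ 0 := by
        intro h0
        rw [neg_eq_zero] at h0
        exact h1 (neg_eq_of_add_eq_zero_right h0).symm
      rw [if_neg h3, zero_mul, zero_smul]
end

section
/- Suppose {P_i : 0 ≤ i ≤ d−1} are d×d matrices of the form P_i = (1/(d√(d+1))) Σ_{r,s ∈ ℤ_d} p_i^{(r,s)} W_{(r,s)} + κ·I with κ = (√(d+1)−1)/(d√(d+1)), where the complex coefficients satisfy: p_i^{(0,0)} = 1 for all i, conj(p_i^{(r,s)}) = p_i^{(−r,−s)}, and Σ_{i=0}^{d−1} |p_i^{(r,s)}|² = d for all (r,s). Then (1/d³) Σ_{i,k,l ∈ ℤ_d} (W_{(k,l)} P_i W_{(k,l)}^{-1}) ⊗ (W_{(k,l)} P_i W_{(k,l)}^{-1}) = (2/(d(d+1)))·Π_sym, where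 Π_sym = (1/2)(I⊗I + SWAP) is the projection onto the symmetric subspace of ℂ^d ⊗ ℂ^d. -/
open Matrix Complex BigOperators
open scoped Kronecker

/-!
For odd `d`, `τ = ψ(1/2)` with `ψ = ZMod.stdAddChar`, so `W_{(r,s)}` sends `e_j` to
`ψ(rs/2 + js) e_{j+r}`. Hence conjugation by `W_{(k,l)}` multiplies `W_{(r,s)}` by `ψ(rl - ks)`,
and by orthogonality of characters the average over `(k,l)` of the conjugates of
`W_{(r,s)} ⊗ W_{(r',s')}` vanishes unless `(r',s') = (-r,-s)`. Writing
`P_i = Σ c_i(r,s) W_{(r,s)}`, the twirl of the family is therefore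
`d² Σ_{r,s} (Σ_i c_i(r,s) c_i(-r,-s)) W_{(r,s)} ⊗ W_{(-r,-s)}`. Off the origin
`c_i(-r,-s) = conj c_i(r,s)` and the norm condition make the inner sum `1 / (d (d + 1))`; at the
origin `c_i(0,0) = 1/d` makes it `1/d`. Finally `Σ W_{(r,s)} ⊗ W_{(-r,-s)} = d · SWAP`.
-/

open ZMod (stdAddChar)

lemma Finset.sum_sum_sum_sum_comm {α β γ δ M : Type*} [Fintype α] [Fintype β] [Fintype γ]
    [Fintype δ] [AddCommMonoid M] (f : α → β → γ → δ → M) :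
    ∑ a, ∑ b, ∑ c, ∑ e, f a b c e = ∑ c, ∑ e, ∑ a, ∑ b, f a b c e := by
  calc ∑ a, ∑ b, ∑ c, ∑ e, f a b c e = ∑ x : α × β, ∑ y : γ × δ, f x.1 x.2 y.1 y.2 := by
        simp only [Fintype.sum_prod_type]
    _ = ∑ y : γ × δ, ∑ x : α × β, f x.1 x.2 y.1 y.2 := Finset.sum_comm
    _ = ∑ c, ∑ e, ∑ a, ∑ b, f a b c e := by simp only [Fintype.sum_prod_type]

lemma Matrix.sum_kronecker {ι l m n p α : Type*} [NonUnitalNonAssocSemiring α] (s : Finset ι)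
    (A : ι → Matrix l m α) (B : Matrix n p α) : (∑ i ∈ s, A i) ⊗ₖ B = ∑ i ∈ s, A i ⊗ₖ B := by
  ext
  simp [Matrix.sum_apply, Finset.sum_mul]

lemma Matrix.kronecker_sum {ι l m n p α : Type*} [NonUnitalNonAssocSemiring α] (s : Finset ι)
    (A : Matrix l m α) (B : ι → Matrix n p α) : A ⊗ₖ (∑ i ∈ s, B i) = ∑ i ∈ s, A ⊗ₖ B i := by
  ext
  simp [Matrix.sum_apply, Finset.mul_sum]

namespace WeylHeisenberg

variable {d : ℕ} [NeZero d]

def half (d : ℕ) : ZMod d := ((d + 1) / 2 : ℕ)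

lemma two_mul_half (hd : Odd d) : 2 * half d = 1 := by
  obtain ⟨m, rfl⟩ := hd
  simp only [half, show (2 * m + 1 + 1) / 2 = m + 1 by omega]
  have : ((2 * m + 1 : ℕ) : ZMod (2 * m + 1)) = 0 := ZMod.natCast_self _
  push_cast at this ⊢
  linear_combination this

lemma tauC_eq_stdAddChar_half (hd : Odd d) : tauC d = stdAddChar (half d) := by
  obtain ⟨m, rfl⟩ := hd
  rw [half, ZMod.stdAddChar_apply, ZMod.toCircle_natCast, tauC,
    show (2 * m + 1 + 1) / 2 = m + 1 by omega]
  have hd0 : ((2 * m + 1 : ℕ) : ℂ) ≠ 0 := Nat.cast_ne_zero.2 (by omega)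
  rw [show 2 * Real.pi * I * ((m + 1 : ℕ) : ℂ) / ((2 * m + 1 : ℕ) : ℂ) =
      Real.pi * I + Real.pi * I / ((2 * m + 1 : ℕ) : ℂ) by field_simp; push_cast; ring,
    Complex.exp_add, Complex.exp_pi_mul_I]
  ring

lemma Vmat_pow_apply (n : ℕ) (i j : ZMod d) :
    (Vmat d ^ n) i j = if i = j + n then 1 else 0 := by
  induction n generalizing j with
  | zero => simp [Matrix.one_apply]
  | succ n ih =>
    simp only [pow_succ, Matrix.mul_apply, Vmat, mul_ite, mul_one, mul_zero,
      Finset.sum_ite_eq', Finset.mem_univ, if_true, ih]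
    push_cast
    simp only [add_assoc, add_comm (1 : ZMod d)]

lemma Umat_eq_diagonal : Umat d = Matrix.diagonal fun k => stdAddChar k := by
  simp only [Umat, ZMod.stdAddChar_apply, ZMod.toCircle_apply]

lemma WH_apply (hd : Odd d) (r s i j : ZMod d) :
    WH d r s i j = if i = j + r then stdAddChar (half d * r * s + j * s) else 0 := by
  rw [WH, tauC_eq_stdAddChar_half hd, Umat_eq_diagonal, Matrix.diagonal_pow, Matrix.smul_apply,
    Matrix.mul_diagonal, Vmat_pow_apply, Pi.pow_apply, ← AddChar.map_nsmul_eq_pow,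
    ← AddChar.map_nsmul_eq_pow, AddChar.map_add_eq_mul]
  simp only [ZMod.natCast_val, ZMod.cast_id', id, nsmul_eq_mul, Nat.cast_mul]
  split_ifs <;> ring_nf

lemma WH_mul (hd : Odd d) (k l r s : ZMod d) :
    WH d k l * WH d r s = stdAddChar (half d * (r * l - k * s)) • WH d (k + r) (l + s) := by
  ext i j
  simp only [Matrix.mul_apply, Matrix.smul_apply, WH_apply hd, ite_mul, zero_mul, mul_ite,
    mul_zero, smul_eq_mul, Finset.sum_ite_eq', Finset.mem_univ, if_true]
  simp only [← AddChar.map_add_eq_mul]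
  rw [add_comm k r, ← add_assoc j r k]
  split_ifs
  · congr 1
    linear_combination -(r * l) * two_mul_half hd
  · rfl

lemma WH_zero_zero : WH d 0 0 = 1 := by
  simp [WH]

lemma WH_inv (hd : Odd d) (k l : ZMod d) : (WH d k l)⁻¹ = WH d (-k) (-l) := by
  refine Matrix.inv_eq_right_inv ?_
  rw [WH_mul hd, add_neg_cancel, add_neg_cancel, WH_zero_zero,
    show -k * l - k * -l = 0 by ring, mul_zero, AddChar.map_zero_eq_one, one_smul]

lemma WH_conj (hd : Odd d) (k l r s : ZMod d) :
    WH d k l * WH d r s * (WH d k l)⁻¹ = stdAddChar (r * l - k * s) • WH d r s := by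
  rw [WH_inv hd, WH_mul hd, Matrix.smul_mul, WH_mul hd, smul_smul, ← AddChar.map_add_eq_mul,
    add_neg_cancel_comm, add_neg_cancel_comm]
  congr 2
  linear_combination (r * l - k * s) * two_mul_half hd

lemma sum_stdAddChar_mul (a : ZMod d) :
    ∑ k : ZMod d, stdAddChar (k * a) = if a = 0 then (d : ℂ) else 0 := by
  rw [AddChar.sum_mulShift a (ZMod.isPrimitive_stdAddChar d), ZMod.card, Nat.cast_ite,
    Nat.cast_zero]

lemma sum_sum_stdAddChar (a b : ZMod d) :
    ∑ k : ZMod d, ∑ l : ZMod d, stdAddChar (k * a + l * b) =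
      if a = 0 ∧ b = 0 then (d : ℂ) ^ 2 else 0 := by
  simp only [AddChar.map_add_eq_mul, ← Finset.mul_sum, ← Finset.sum_mul, sum_stdAddChar_mul]
  split_ifs <;> simp_all [sq]

noncomputable def twirl (X Y : Matrix (ZMod d) (ZMod d) ℂ) :
    Matrix (ZMod d × ZMod d) (ZMod d × ZMod d) ℂ :=
  ∑ k : ZMod d, ∑ l : ZMod d, (WH d k l * X * (WH d k l)⁻¹) ⊗ₖ (WH d k l * Y * (WH d k l)⁻¹)

lemma twirl_WH_WH (hd : Odd d) (r s r' s' : ZMod d) :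
    twirl (WH d r s) (WH d r' s') =
      if r' = -r ∧ s' = -s then (d : ℂ) ^ 2 • (WH d r s ⊗ₖ WH d (-r) (-s)) else 0 := by
  have hphase : ∀ k l : ZMod d, stdAddChar (r' * l - k * s') * stdAddChar (r * l - k * s) =
      stdAddChar (k * -(s + s') + l * (r + r')) := fun k l => by
    rw [← AddChar.map_add_eq_mul]; ring_nf
  have hiff : (-(s + s') = 0 ∧ r + r' = 0) ↔ (r' = -r ∧ s' = -s) := by
    rw [neg_eq_zero, add_eq_zero_iff_eq_neg', add_eq_zero_iff_eq_neg', and_comm]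
  simp only [twirl, WH_conj hd, smul_kronecker, kronecker_smul, smul_smul, hphase,
    ← Finset.sum_smul, sum_sum_stdAddChar, hiff]
  split_ifs with h
  · rw [h.1, h.2]
  · exact zero_smul _ _

lemma sum_WH_kronecker_WH_neg (hd : Odd d) :
    ∑ r : ZMod d, ∑ s : ZMod d, WH d r s ⊗ₖ WH d (-r) (-s) = (d : ℂ) • SWAPmat d := by
  ext ⟨i, i'⟩ ⟨j, j'⟩
  simp only [Matrix.sum_apply, Matrix.kronecker_apply, WH_apply hd, SWAPmat, Matrix.smul_apply,
    ite_mul, mul_ite, zero_mul, mul_zero, ← AddChar.map_add_eq_mul, smul_eq_mul]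
  have hphase : ∀ c, half d * (i - j) * c + j * c + (half d * -(i - j) * -c + j' * -c) =
      c * (i - j') := fun c => by
    linear_combination ((i - j) * c) * two_mul_half hd
  rw [Finset.sum_eq_single (i - j)]
  · simp only [add_sub_cancel, if_true, hphase, Finset.sum_ite_irrel, Finset.sum_const_zero,
      sum_stdAddChar_mul, sub_eq_zero]
    by_cases hij : i = j'
    · subst hij
      simp [neg_sub]
    · simp [hij]
  · intro x _ hx
    have hne : ¬i = j + x := fun h => hx (by rw [h, add_sub_cancel_left])
    simp [hne]
  · simp

noncomputable def weylSum (c : ZMod d → ZMod d → ℂ) : Matrix (ZMod d) (ZMod d) ℂ :=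
  ∑ r : ZMod d, ∑ s : ZMod d, c r s • WH d r s

lemma weylSum_affine (a κ : ℂ) (c : ZMod d → ZMod d → ℂ) :
    weylSum (fun r s => a * c r s + if r = 0 ∧ s = 0 then κ else 0) = a • weylSum c + κ • 1 := by
  simp only [weylSum, add_smul, Finset.sum_add_distrib, Finset.smul_sum, smul_smul, ite_smul,
    zero_smul, ite_and, Finset.sum_ite_eq', Finset.mem_univ, if_true, Finset.sum_ite_irrel,
    Finset.sum_const_zero, WH_zero_zero]

lemma mul_weylSum_mul (A B : Matrix (ZMod d) (ZMod d) ℂ) (c : ZMod d → ZMod d → ℂ) :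
    A * weylSum c * B = ∑ r : ZMod d, ∑ s : ZMod d, c r s • (A * WH d r s * B) := by
  simp only [weylSum, Matrix.mul_sum, Matrix.sum_mul, Matrix.mul_smul, Matrix.smul_mul]

lemma twirl_weylSum (hd : Odd d) (c c' : ZMod d → ZMod d → ℂ) :
    twirl (weylSum c) (weylSum c') =
      (d : ℂ) ^ 2 • ∑ r : ZMod d, ∑ s : ZMod d,
        (c r s * c' (-r) (-s)) • (WH d r s ⊗ₖ WH d (-r) (-s)) := by
  simp only [twirl, mul_weylSum_mul, Matrix.sum_kronecker]
  simp only [Matrix.kronecker_sum, Matrix.smul_kronecker, Matrix.kronecker_smul, smul_smul,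
    Finset.smul_sum]
  rw [Finset.sum_sum_sum_sum_comm]
  refine Finset.sum_congr rfl fun r _ => Finset.sum_congr rfl fun s _ => ?_
  rw [Finset.sum_sum_sum_sum_comm]
  simp only [← Finset.smul_sum, ← twirl.eq_1, twirl_WH_WH hd, smul_ite, smul_zero, ite_and,
    Finset.sum_ite_irrel, Finset.sum_const_zero, Finset.sum_ite_eq', Finset.mem_univ, if_true]
  rw [smul_smul]
  ring_nf

lemma sum_twirl_weylSum (hd : Odd d) {ι : Type*} [Fintype ι] (c : ι → ZMod d → ZMod d → ℂ) :
    ∑ i, twirl (weylSum (c i)) (weylSum (c i)) =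
      (d : ℂ) ^ 2 • ∑ r : ZMod d, ∑ s : ZMod d,
        (∑ i, c i r s * c i (-r) (-s)) • (WH d r s ⊗ₖ WH d (-r) (-s)) := by
  simp only [twirl_weylSum hd, ← Finset.smul_sum, Finset.sum_smul]
  rw [Finset.sum_comm]
  exact congrArg _ (Finset.sum_congr rfl fun r _ => Finset.sum_comm)

lemma sum_smul_WH_kronecker_WH_neg (hd : Odd d) (e : ZMod d → ZMod d → ℂ) (α β : ℂ)
    (he : ∀ r s, ¬(r = 0 ∧ s = 0) → e r s = α) (he0 : e 0 0 = α + β) :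
    ∑ r : ZMod d, ∑ s : ZMod d, e r s • (WH d r s ⊗ₖ WH d (-r) (-s)) =
      (α * d) • SWAPmat d + β • (1 ⊗ₖ 1 : Matrix (ZMod d × ZMod d) _ ℂ) := by
  obtain rfl : e = fun r s => α + if r = 0 ∧ s = 0 then β else 0 := by
    ext r s
    split_ifs with h
    · rw [h.1, h.2, he0]
    · rw [he r s h, add_zero]
  simp only [add_smul, Finset.sum_add_distrib, ← Finset.smul_sum, sum_WH_kronecker_WH_neg hd,
    smul_smul, ite_smul, zero_smul, ite_and, Finset.sum_ite_eq', Finset.mem_univ, if_true,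
    Finset.sum_ite_irrel, Finset.sum_const_zero, neg_zero, WH_zero_zero]

end WeylHeisenberg

open WeylHeisenberg

theorem two_design_from_coeffs (d : ℕ) [NeZero d] (hd : Odd d)
    (P : ZMod d → Matrix (ZMod d) (ZMod d) ℂ)
    (p : ZMod d → ZMod d → ZMod d → ℂ)
    (hP : ∀ i, P i =
      (1 / (d * Real.sqrt (d + 1)) : ℂ) • ∑ r : ZMod d, ∑ s : ZMod d, p i r s • WH d r s +
        ((Real.sqrt (d + 1) - 1) / (d * Real.sqrt (d + 1)) : ℂ) •
          (1 : Matrix (ZMod d) (ZMod d) ℂ))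
    (h0 : ∀ i, p i 0 0 = 1)
    (hconj : ∀ i r s, starRingEnd ℂ (p i r s) = p i (-r) (-s))
    (hnorm : ∀ r s : ZMod d, ∑ i : ZMod d, ‖p i r s‖ ^ 2 = d) :
    (1 / (d : ℂ) ^ 3) • ∑ i : ZMod d, ∑ k : ZMod d, ∑ l : ZMod d,
        (WH d k l * P i * (WH d k l)⁻¹) ⊗ₖ (WH d k l * P i * (WH d k l)⁻¹) =
      (2 / (d * (d + 1)) : ℂ) •
        ((1 / 2 : ℂ) • ((1 : Matrix (ZMod d) (ZMod d) ℂ) ⊗ₖ (1 : Matrix (ZMod d) (ZMod d) ℂ)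
          + SWAPmat d)) := by
  set t : ℂ := ((Real.sqrt (d + 1) : ℝ) : ℂ)
  have ht : t ^ 2 = d + 1 := by
    rw [← Complex.ofReal_pow, Real.sq_sqrt (by positivity)]
    push_cast
    ring
  set a : ℂ := 1 / (d * t)
  set κ : ℂ := (t - 1) / (d * t)
  set c : ZMod d → ZMod d → ZMod d → ℂ := fun i r s => a * p i r s + if r = 0 ∧ s = 0 then κ else 0
  have hPc : ∀ i, P i = weylSum (c i) := fun i => by rw [hP i, weylSum_affine]; rfl
  have hoff : ∀ r s, ¬(r = 0 ∧ s = 0) → ∑ i, c i r s * c i (-r) (-s) = a ^ 2 * d := by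
    intro r s hrs
    have hrs' : ¬(-r = 0 ∧ -s = 0) := by simpa only [neg_eq_zero] using hrs
    simp only [c, if_neg hrs, if_neg hrs', add_zero, ← hconj]
    simp only [mul_mul_mul_comm _ (p _ r s), Complex.mul_conj', ← sq, ← Finset.mul_sum]
    rw [← Complex.ofReal_natCast, ← hnorm r s]
    push_cast
    rfl
  have horig : ∑ i, c i 0 0 * c i (-0) (-0) = a ^ 2 * d + ((a + κ) ^ 2 - a ^ 2) * d := by
    simp [c, h0]
    ring
  change (1 / (d : ℂ) ^ 3) • ∑ i, twirl (P i) (P i) = _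
  simp only [hPc]
  rw [sum_twirl_weylSum hd, sum_smul_WH_kronecker_WH_neg hd _ _ _ hoff horig]
  have hd0 : (d : ℂ) ≠ 0 := Nat.cast_ne_zero.2 (NeZero.ne d)
  have ht0 : t ≠ 0 := Complex.ofReal_ne_zero.2 (Real.sqrt_pos.2 (by positivity)).ne'
  match_scalars <;> simp only [a, κ] <;> field_simp
  · linear_combination -ht
  · linear_combination ht
end

section
/- If rank-one projections {P_i : 1 ≤ i ≤ N} on ℂ^d satisfy the 2-design condition (1/N) Σ_i P_i ⊗ P_i = (2/(d(d+1)))·Π_sym with Π_sym = (1/2)(I⊗I + SWAP), then for every d×d matrix ρ with tr(ρ) = 1 one has ρ = (d+1)·Σ_{i=1}^N (d/N)·tr(ρ P_i)·P_i − I. -/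
open Matrix Complex BigOperators
open scoped Kronecker

/-- The SWAP operator on `ℂ^d ⊗ ℂ^d` (indices `Fin d`). -/
def SWAPfin (d : ℕ) : Matrix (Fin d × Fin d) (Fin d × Fin d) ℂ :=
  fun p q => if p.1 = q.2 ∧ p.2 = q.1 then 1 else 0

theorem state_reconstruction_from_two_design (d N : ℕ) (hd : 1 ≤ d) (hN : 1 ≤ N)
    (P : Fin N → Matrix (Fin d) (Fin d) ℂ)
    (hproj : ∀ i, P i * P i = P i)
    (hherm : ∀ i, (P i)ᴴ = P i)
    (hrank : ∀ i, (P i).rank = 1)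
    (hdesign : ∑ i, P i ⊗ₖ P i =
      ((N : ℂ) / (d * (d + 1))) •
        ((1 : Matrix (Fin d) (Fin d) ℂ) ⊗ₖ (1 : Matrix (Fin d) (Fin d) ℂ) + SWAPfin d)) :
    ∀ ρ : Matrix (Fin d) (Fin d) ℂ, Matrix.trace ρ = 1 →
      ρ = ((d : ℂ) + 1) •
          ∑ i, (((d : ℂ) / N) * Matrix.trace (ρ * P i)) • P i - 1 := by
  intro ρ hρ
  have hd0 : (d : ℂ) ≠ 0 := Nat.cast_ne_zero.mpr (by omega)
  have hN0 : (N : ℂ) ≠ 0 := Nat.cast_ne_zero.mpr (by omega)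
  have hd1 : (d : ℂ) + 1 ≠ 0 := by
    have : ((d + 1 : ℕ) : ℂ) ≠ 0 := Nat.cast_ne_zero.mpr (by omega)
    push_cast at this
    exact this
  set K : ℂ := (N : ℂ) / (d * (d + 1)) with hK
  have key : ∀ a b c e : Fin d, ∑ i, P i a c * P i b e =
      K * ((if a = c ∧ b = e then (1:ℂ) else 0) + if a = e ∧ b = c then (1:ℂ) else 0) := by
    intro a b c e
    have h := congrFun (congrFun hdesign (a, b)) (c, e)
    simpa [Matrix.sum_apply, Matrix.kroneckerMap_apply, SWAPfin, Matrix.one_apply,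
      Matrix.smul_apply, Matrix.add_apply, smul_eq_mul] using h
  have hsum : ∀ b e : Fin d, ∑ i, Matrix.trace (ρ * P i) * P i b e =
      K * ((if b = e then (1:ℂ) else 0) + ρ b e) := by
    intro b e
    have h1 : ∀ i : Fin N, Matrix.trace (ρ * P i) * P i b e =
        ∑ c, ∑ a, ρ c a * (P i a c * P i b e) := by
      intro i
      simp [Matrix.trace, Matrix.mul_apply, Matrix.diag, Finset.sum_mul, mul_assoc]
    rw [Finset.sum_congr rfl (fun i _ => h1 i)]
    rw [Finset.sum_comm]
    have h2 : ∀ c : Fin d, ∑ i, ∑ a, ρ c a * (P i a c * P i b e) =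
        ∑ a, ρ c a * (K * ((if a = c ∧ b = e then (1:ℂ) else 0) +
          if a = e ∧ b = c then (1:ℂ) else 0)) := by
      intro c
      rw [Finset.sum_comm]
      refine Finset.sum_congr rfl fun a _ => ?_
      rw [← Finset.mul_sum, key]
    rw [Finset.sum_congr rfl (fun c _ => h2 c)]
    have htr : ∑ a : Fin d, ρ a a = 1 := hρ
    simp only [mul_add, Finset.sum_add_distrib]
    congr 1
    · by_cases hbe : b = e
      · simp only [hbe, and_true, if_true]
        have h3 : ∀ c : Fin d, ∑ a, ρ c a * (K * if a = c then (1:ℂ) else 0) = K * ρ c c := by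
          intro c
          rw [Finset.sum_eq_single c]
          · simp [mul_comm]
          · intro a _ ha; simp [ha]
          · simp
        rw [Finset.sum_congr rfl (fun c _ => h3 c), ← Finset.mul_sum, htr, mul_one]
      · simp [hbe]
    · rw [Finset.sum_eq_single b]
      · rw [Finset.sum_eq_single e]
        · simp [mul_comm]
        · intro a _ ha; simp [ha]
        · simp
      · intro c _ hc
        apply Finset.sum_eq_zero
        intro a _
        simp [Ne.symm hc]
      · simp
  ext b e
  simp only [Matrix.sub_apply, Matrix.smul_apply, Matrix.sum_apply, Matrix.one_apply,
    smul_eq_mul]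
  have hre : ∑ i, ((d : ℂ) / N * Matrix.trace (ρ * P i)) * P i b e =
      ((d : ℂ) / N) * ∑ i, Matrix.trace (ρ * P i) * P i b e := by
    rw [Finset.mul_sum]; exact Finset.sum_congr rfl fun i _ => by ring
  rw [hre, hsum b e, hK]
  by_cases hbe : b = e
  · simp only [hbe, if_true]
    field_simp
    ring
  · simp only [if_neg hbe]
    field_simp
    ring
end
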